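/- Let n ≥ 3 and let f ∈ Lie_n[x,y] have the property that, expanded as a polynomial, f has no monomial that both starts and ends in y, so that writing f = f_x·x + f_y·y one has f_y·y = x·P·y for some polynomial P ∈ ℚ⟨x,y⟩ homogeneous of degree n−2. Then s(P) ∈ Lie_{n−1}[x,y] and f = [x, s(P)]. -/

import Mathlib

/- Common setup: the ring ℚ⟨x,y⟩ of polynomials in two non-commuting variables,
   modelled as the monoid algebra of the free monoid on two letters
   (letter 0 ↦ x, letter 1 ↦ y). -/

abbrev Word := FreeMonoid (Fin 2)
abbrev R2 := MonoidAlgebra ℚ Word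

noncomputable section
namespace DblSh

/-- The variable x. -/
def X : R2 := MonoidAlgebra.of ℚ Word (FreeMonoid.of 0)
/-- The variable y. -/
def Y : R2 := MonoidAlgebra.of ℚ Word (FreeMonoid.of 1)
/-- The monomial associated to a word. -/
def mono (w : Word) : R2 := MonoidAlgebra.single w 1
/-- (f|w), the coefficient of the monomial w in f. -/
def coeff (f : R2) (w : Word) : ℚ := f.coeff w
/-- The pairing (f|g) = Σ_w (g|w)·(f|w), i.e. (f|·) extended linearly. -/
def pairing (f g : R2) : ℚ := Finsupp.sum g.coeff (fun w c => c * f.coeff w)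
/-- Degree of a word. -/
def wlen (w : Word) : ℕ := (FreeMonoid.toList w).length
/-- Depth of a word: the number of letters y. -/
def countY (w : Word) : ℕ := (FreeMonoid.toList w).count 1

attribute [local instance] LieRing.ofAssociativeRing

/-- Lie[x,y]: the Lie subalgebra of ℚ⟨x,y⟩ generated by x and y (the free Lie algebra). -/
def LieP : LieSubalgebra ℚ R2 := LieSubalgebra.lieSpan ℚ R2 {X, Y}
/-- f is homogeneous of degree n. -/
def IsHomog (n : ℕ) (f : R2) : Prop := ∀ w ∈ f.coeff.support, wlen w = n
/-- f ∈ Lie_n[x,y]. -/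
def InLieN (n : ℕ) (f : R2) : Prop := f ∈ LieP ∧ IsHomog n f

/-- `anti` on words: reversal. -/
def antiW (w : Word) : Word := FreeMonoid.ofList (FreeMonoid.toList w).reverse
/-- The linear operator `anti` reversing each monomial. -/
def anti (f : R2) : R2 := MonoidAlgebra.ofCoeff (Finsupp.mapDomain antiW f.coeff)
/-- f (homogeneous of degree m) is antipalindromic: f = (−1)^m · anti f. -/
def Antipal (m : ℕ) (f : R2) : Prop := f = ((-1 : ℚ))^m • anti f

/-- `push` on a word containing at least one y:
    push(x^{a₀}y⋯y x^{a_{r-1}} y x^{a_r}) = x^{a_r} y x^{a₀} y ⋯ y x^{a_{r-1}};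
    words with no y are left fixed. -/
def pushW (w : Word) : Word :=
  let l := (FreeMonoid.toList w).reverse
  let t := l.takeWhile (fun c => c = 0)
  match l.dropWhile (fun c => c = 0) with
  | [] => w
  | _ :: rest => FreeMonoid.ofList (t.reverse ++ (1 :: rest.reverse))
/-- `push` extended linearly to polynomials. -/
def pushP (f : R2) : R2 := MonoidAlgebra.ofCoeff (Finsupp.mapDomain pushW f.coeff)
/-- The list Push(w) of the r+1 iterates of push on w (r = depth of w). -/
def PushList (w : Word) : List Word := (List.range (countY w + 1)).map (fun k => pushW^[k] w)
/-- The word y^m. -/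
def yPow (m : ℕ) : Word := FreeMonoid.ofList (List.replicate m 1)
/-- f (homogeneous of degree m) is push-constant for the constant A. -/
def PushConst (m : ℕ) (f : R2) (A : ℚ) : Prop :=
  coeff f (yPow m) = 0 ∧
  ∀ w : Word, wlen w = m → w ≠ yPow m → ((PushList w).map (fun v => coeff f v)).sum = A

/-- ∂_x on a word (Leibniz expansion). -/
def dxW (w : Word) : R2 :=
  ∑ i ∈ Finset.range (wlen w),
    if (FreeMonoid.toList w).getD i 1 = 0
    then mono (FreeMonoid.ofList ((FreeMonoid.toList w).eraseIdx i)) else 0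
/-- The derivation ∂_x of ℚ⟨x,y⟩, with ∂_x(x) = 1 and ∂_x(y) = 0. -/
def dx (f : R2) : R2 := Finsupp.sum f.coeff (fun w c => c • dxW w)
/-- s(h) = Σ_{i≥0} ((−1)^i/i!)·∂_x^i(h)·y·x^i. -/
def sMap (h : R2) : R2 := ∑ᶠ i : ℕ, ((-1 : ℚ)^i / (i.factorial : ℚ)) • (dx^[i] h * Y * X ^ i)
/-- s'(h) = Σ_{i≥0} ((−1)^i/i!)·x^i·y·∂_x^i(h). -/
def s'Map (h : R2) : R2 := ∑ᶠ i : ℕ, ((-1 : ℚ)^i / (i.factorial : ℚ)) • (X ^ i * Y * dx^[i] h)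

/-- The algebra endomorphism of ℚ⟨x,y⟩ with x ↦ a, y ↦ b. -/
def subst (a b : R2) : R2 →ₐ[ℚ] R2 :=
  MonoidAlgebra.lift ℚ R2 Word (FreeMonoid.lift (fun i : Fin 2 => if i = 0 then a else b))

/-- The value on a word of the derivation of ℚ⟨x,y⟩ with x ↦ a, y ↦ b (Leibniz expansion). -/
def derW (a b : R2) (w : Word) : R2 :=
  ∑ i ∈ Finset.range (wlen w),
    mono (FreeMonoid.ofList ((FreeMonoid.toList w).take i)) *
      (if (FreeMonoid.toList w).getD i 1 = 0 then a else b) *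
      mono (FreeMonoid.ofList ((FreeMonoid.toList w).drop (i+1)))
/-- The derivation of ℚ⟨x,y⟩ with x ↦ a, y ↦ b. -/
def derP (a b : R2) (f : R2) : R2 := Finsupp.sum f.coeff (fun w c => c • derW a b w)
/-- The derivation D_{F,G} with x ↦ [x,G], y ↦ [y,F]. -/
def DFG (F G : R2) : R2 → R2 := derP (X * G - G * X) (Y * F - F * Y)

/-- The subspace of ℚ⟨x,y⟩ spanned by all commutators ab − ba. -/
def trIdeal : Submodule ℚ R2 := Submodule.span ℚ {c : R2 | ∃ a b : R2, c = a * b - b * a}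
/-- TR, the trace space. -/
abbrev TRsp := R2 ⧸ trIdeal
/-- The trace map tr : ℚ⟨x,y⟩ → TR. -/
def trQ : R2 →ₗ[ℚ] TRsp := trIdeal.mkQ

/-- Generators of krv2: the special derivations D_{F,G}, F,G ∈ Lie_n[x,y] (n ≥ 1),
    satisfying the trace condition tr(F_y·y + G_x·x) = A·tr((x+y)^n − x^n − y^n). -/
def krvGens : Set (R2 → R2) :=
  {D | ∃ n : ℕ, 1 ≤ n ∧ ∃ F G : R2, InLieN n F ∧ InLieN n G ∧ D = DFG F G ∧
    (X * G - G * X) + (Y * F - F * Y) = 0 ∧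
    ∃ Fx Fy Gx Gy : R2, F = Fx * X + Fy * Y ∧ G = Gx * X + Gy * Y ∧
      ∃ A : ℚ, trQ (Fy * Y + Gx * X) = A • trQ ((X + Y)^n - X^n - Y^n)}
/-- The Kashiwara–Vergne Lie algebra krv2, as a space of operators. -/
def krv2 : Submodule ℚ (R2 → R2) := Submodule.span ℚ krvGens

/-- The space V_kv of Theorem 1.2. -/
def Vkv : Submodule ℚ R2 :=
  Submodule.span ℚ {F : R2 | ∃ n : ℕ, 3 ≤ n ∧ InLieN n F ∧
    ∃ Fx Fy : R2, F = Fx * X + Fy * Y ∧ Antipal (n-1) Fy ∧ ∃ A : ℚ, PushConst (n-1) (Fy - Fx) A}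

/-- y_i = x^{i-1}y. -/
def yi (i : ℕ) : Word := FreeMonoid.ofList (List.replicate (i - 1) 0 ++ [1])
/-- The word y_{i₁}⋯y_{i_k} associated to a composition (i₁,…,i_k). -/
def wordOfComp (l : List ℕ) : Word := (l.map yi).prod
/-- The stuffle product of two words ending in y, encoded as compositions. -/
def st : List ℕ → List ℕ → R2
  | [], v => mono (wordOfComp v)
  | u, [] => mono (wordOfComp u)
  | i :: u, j :: v =>
      mono (yi i) * st u (j :: v) + mono (yi j) * st (i :: u) v + mono (yi (i + j)) * st u v
termination_by u v => u.length + v.length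

/-- Membership in the double shuffle Lie algebra ds. -/
def inDS (f : R2) : Prop :=
  f ∈ LieP ∧ (∀ w ∈ f.coeff.support, 3 ≤ wlen w) ∧
  ∀ u v : List ℕ, u ≠ [] → v ≠ [] → (∀ i ∈ u, 1 ≤ i) → (∀ i ∈ v, 1 ≤ i) →
    ¬((∀ i ∈ u, i = 1) ∧ (∀ i ∈ v, i = 1)) → pairing f (st u v) = 0
/-- Membership in ds_n = ds ∩ Lie_n[x,y]. -/
def inDSn (n : ℕ) (f : R2) : Prop := inDS f ∧ IsHomog n f

/-- The derivation D_f with x ↦ 0, y ↦ [y,f]. -/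
def Dlow (f : R2) : R2 → R2 := derP 0 (Y * f - f * Y)
/-- The Poisson bracket {f,g} = [f,g] + D_f(g) − D_g(f). -/
def poisson (f g : R2) : R2 := (f * g - g * f) + Dlow f g - Dlow g f

/-- The projection f ↦ f^x, where f = x·f^x + y·f^y (f without constant term). -/
def compL (f : R2) : R2 :=
  MonoidAlgebra.ofCoeff (Finsupp.comapDomain (fun w : Word => FreeMonoid.of 0 * w) f.coeff
    (Set.injOn_of_injective (mul_right_injective (FreeMonoid.of 0))))

/-!
Every Lie polynomial `f` is recovered from its component `f_y` by the map `s`: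
`f = s(f_y) + f(x)·x`. Together with `s(f·h) = f·s(h) - f(x)·s(h)·x`, this identity is stable
under brackets, hence holds on all of Lie[x,y]. Here `f_y = x·P` and `s(x·P) = [x, s(P)]`, which
gives `f = [x, s(P)]`.

That `u = s(P)` is a Lie polynomial follows from the Dynkin–Specht–Wever theorem: on Lie
polynomials of degree `m`, the right-normed bracketing `ψ` is multiplication by `m`. Let `θ`
replace each letter by its adjoint action. Since `ad x` is injective on homogeneous elements
without a power of `x`, comparing `[x, θ_P([x,y])] = θ_{f_y}([x,y]) = [x, f]` gives
`θ_P([x,y]) = f`, hence `θ_u(x) = -f` and `ψ(f) = [x, ψ(u)] + f`. With `ψ(f) = n·f` this makes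
`[x, ψ(u) - (n-1)·u] = 0`, so `ψ(u) = (n-1)·u` and `u = ψ(u)/(n-1)` is a Lie polynomial.
-/

instance : CoeFun R2 (fun _ => Word → ℚ) := ⟨fun f => f.coeff⟩

instance : DecidableEq Word := inferInstanceAs (DecidableEq (List (Fin 2)))

theorem ext_apply {f g : R2} (h : ∀ w, f w = g w) : f = g := MonoidAlgebra.ext (Finsupp.ext h)

theorem single_apply (v w : Word) (c : ℚ) :
    MonoidAlgebra.single v c w = if v = w then c else 0 := Finsupp.single_apply

def letter (a : Fin 2) : R2 := MonoidAlgebra.of ℚ Word (FreeMonoid.of a)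

theorem letter_zero : letter 0 = X := rfl

theorem letter_one : letter 1 = Y := rfl

theorem letter_eq_single (a : Fin 2) : letter a = MonoidAlgebra.single (FreeMonoid.of a) 1 := rfl

theorem letter_mem_LieP (a : Fin 2) : letter a ∈ LieP := by
  fin_cases a <;> exact LieSubalgebra.subset_lieSpan (by simp [letter_zero, letter_one])

theorem X_pow_eq_of (m : ℕ) : X ^ m = MonoidAlgebra.of ℚ Word (FreeMonoid.of 0 ^ m) :=
  (map_pow _ _ _).symm

theorem toList_of_pow (a : Fin 2) (m : ℕ) :
    FreeMonoid.toList (FreeMonoid.of a ^ m) = List.replicate m a := by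
  induction m with
  | zero => rfl
  | succ m ih => rw [pow_succ, FreeMonoid.toList_mul, ih, List.replicate_succ']; rfl

theorem wlen_mul (u v : Word) : wlen (u * v) = wlen u + wlen v := List.length_append

theorem wlen_one : wlen 1 = 0 := rfl

theorem wlen_of (a : Fin 2) : wlen (FreeMonoid.of a) = 1 := rfl

theorem wlen_of_pow (a : Fin 2) (m : ℕ) : wlen (FreeMonoid.of a ^ m) = m := by
  rw [wlen, toList_of_pow, List.length_replicate]

theorem of_mul_ne_one (u : Word) (a : Fin 2) : u * FreeMonoid.of a ≠ 1 := fun h =>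
  Nat.succ_ne_zero _ ((wlen_mul u _).symm.trans (congrArg wlen h))

theorem letter_apply_one (a : Fin 2) : letter a 1 = 0 := by
  rw [letter_eq_single, single_apply, if_neg fun h => of_mul_ne_one 1 a ((one_mul _).trans h)]

theorem X_apply_of_pow (m : ℕ) : X (FreeMonoid.of 0 ^ m) = if m = 1 then 1 else 0 := by
  rw [← letter_zero, letter_eq_single, single_apply]
  refine if_congr ⟨fun h => ?_, fun h => by rw [h, pow_one]⟩ rfl rfl
  simpa [wlen_of_pow, wlen_of] using (congrArg wlen h).symm

theorem X_apply_of_zero : X (FreeMonoid.of 0) = 1 := by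
  simpa using X_apply_of_pow 1

theorem Y_apply_of_zero : Y (FreeMonoid.of 0) = 0 := by
  rw [← letter_one, letter_eq_single, single_apply, if_neg (FreeMonoid.of_injective.ne (by decide))]

def linExt (φ : Word → R2) : R2 →ₗ[ℚ] R2 :=
  Finsupp.linearCombination ℚ φ ∘ₗ (MonoidAlgebra.coeffLinearEquiv ℚ).toLinearMap

theorem linExt_single (φ : Word → R2) (w : Word) (c : ℚ) :
    linExt φ (MonoidAlgebra.single w c) = c • φ w :=
  Finsupp.linearCombination_single ℚ c w

section Homogeneity

variable {m p q : ℕ} {f g : R2}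

theorem IsHomog.apply_eq_zero (hf : IsHomog m f) {w : Word} (hw : wlen w ≠ m) : f w = 0 :=
  Finsupp.notMem_support_iff.mp fun h => hw (hf w h)

theorem isHomog_zero (m : ℕ) : IsHomog m 0 := fun w hw => by simp at hw

theorem isHomog_single {w : Word} (hw : wlen w = m) (c : ℚ) :
    IsHomog m (MonoidAlgebra.single w c) := fun v hv => by
  rwa [Finset.mem_singleton.mp (Finsupp.support_single_subset hv)]

theorem IsHomog.add (hf : IsHomog m f) (hg : IsHomog m g) : IsHomog m (f + g) := fun w hw => by
  rcases Finset.mem_union.mp (Finsupp.support_add hw) with h | h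
  exacts [hf w h, hg w h]

theorem IsHomog.smul (c : ℚ) (hf : IsHomog m f) : IsHomog m (c • f) := fun w hw =>
  hf w (Finsupp.support_smul hw)

theorem IsHomog.sub (hf : IsHomog m f) (hg : IsHomog m g) : IsHomog m (f - g) := by
  simpa [sub_eq_add_neg] using hf.add (hg.smul (-1))

theorem IsHomog.mul (hf : IsHomog p f) (hg : IsHomog q g) : IsHomog (p + q) (f * g) :=
  fun w hw => by
    obtain ⟨u, hu, v, hv, rfl⟩ :=
      Finset.mem_mul.mp (MonoidAlgebra.support_coeff_mul_subset f g hw)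
    rw [wlen_mul, hf u hu, hg v hv]

theorem IsHomog.lie (hf : IsHomog p f) (hg : IsHomog q g) : IsHomog (p + q) ⁅f, g⁆ := by
  rw [Ring.lie_def]
  exact (hf.mul hg).sub (by rw [add_comm]; exact hg.mul hf)

theorem isHomog_sum {ι : Type*} (s : Finset ι) {F : ι → R2} (h : ∀ i ∈ s, IsHomog m (F i)) :
    IsHomog m (∑ i ∈ s, F i) := by
  classical
  induction s using Finset.induction with
  | empty => exact isHomog_zero m
  | insert i s hi ih =>
    rw [Finset.sum_insert hi]
    exact (h i (Finset.mem_insert_self i s)).add (ih fun j hj => h j (Finset.mem_insert_of_mem hj))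

theorem isHomog_letter (a : Fin 2) : IsHomog 1 (letter a) := isHomog_single rfl 1

theorem isHomog_X : IsHomog 1 X := isHomog_letter 0

theorem isHomog_Y : IsHomog 1 Y := isHomog_letter 1

theorem isHomog_X_pow (m : ℕ) : IsHomog m (X ^ m) := by
  rw [X_pow_eq_of]; exact isHomog_single (wlen_of_pow 0 m) 1

theorem IsHomog.map {L : R2 →ₗ[ℚ] R2}
    (hL : ∀ w c, wlen w = p → IsHomog q (L (MonoidAlgebra.single w c))) (hf : IsHomog p f) :
    IsHomog q (L f) := by
  rw [← MonoidAlgebra.sum_coeff_single f, map_finsuppSum]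
  exact isHomog_sum _ fun w hw => hL w _ (hf w hw)

end Homogeneity

def degD : R2 →ₗ[ℚ] R2 := linExt fun w => (wlen w : ℚ) • MonoidAlgebra.single w 1

theorem degD_single (w : Word) (c : ℚ) :
    degD (MonoidAlgebra.single w c) = (wlen w : ℚ) • MonoidAlgebra.single w c := by
  rw [degD, linExt_single, smul_comm, MonoidAlgebra.smul_single, smul_eq_mul, mul_one]

theorem degD_mul (f g : R2) : degD (f * g) = degD f * g + f * degD g := by
  induction f using MonoidAlgebra.induction_linear with
  | zero => simp
  | add f f' hf hf' => simp only [add_mul, map_add, hf, hf']; abel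
  | single u r =>
    induction g using MonoidAlgebra.induction_linear with
    | zero => simp
    | add g g' hg hg' => simp only [mul_add, map_add, hg, hg']; abel
    | single v s =>
      simp only [MonoidAlgebra.single_mul_single, degD_single, smul_mul_assoc, mul_smul_comm,
        wlen_mul, Nat.cast_add, add_smul]

theorem degD_letter (a : Fin 2) : degD (letter a) = letter a := by
  rw [letter_eq_single, degD_single, wlen_of, Nat.cast_one, one_smul]

theorem IsHomog.degD_eq {m : ℕ} {f : R2} (hf : IsHomog m f) : degD f = (m : ℚ) • f := by
  conv_lhs => rw [← MonoidAlgebra.sum_coeff_single f]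
  rw [map_finsuppSum, ← MonoidAlgebra.sum_coeff_single (_ • f), MonoidAlgebra.coeff_smul,
    Finsupp.sum_smul_index (by simp)]
  exact Finsupp.sum_congr fun w hw => by
    rw [degD_single, hf w hw, MonoidAlgebra.smul_single, smul_eq_mul]

/-- `rstrip 0 f` and `rstrip 1 f` are the `f_x` and `f_y` of `f = f(1) + f_x·x + f_y·y`. -/
def rstrip (a : Fin 2) : R2 →ₗ[ℚ] R2 where
  toFun f := MonoidAlgebra.ofCoeff (Finsupp.comapDomain (· * FreeMonoid.of a) f.coeff
    (Set.injOn_of_injective (mul_left_injective _)))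
  map_add' _ _ := MonoidAlgebra.ext (Finsupp.ext fun _ => rfl)
  map_smul' _ _ := MonoidAlgebra.ext (Finsupp.ext fun _ => rfl)

section Rstrip

variable (a : Fin 2)

theorem rstrip_apply (f : R2) (w : Word) : rstrip a f w = f (w * FreeMonoid.of a) := rfl

theorem mul_of_eq_mul_of_iff {u v : Word} {b : Fin 2} :
    u * FreeMonoid.of b = v * FreeMonoid.of a ↔ u = v ∧ b = a := by
  rw [← FreeMonoid.toList.injective.eq_iff, FreeMonoid.toList_mul, FreeMonoid.toList_mul,
    FreeMonoid.toList_of, FreeMonoid.toList_of, ← List.concat_eq_append, ← List.concat_eq_append,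
    List.concat_inj, FreeMonoid.toList.injective.eq_iff]

theorem rstrip_single_mul_of (z : Word) (b : Fin 2) (c : ℚ) :
    rstrip a (MonoidAlgebra.single (z * FreeMonoid.of b) c) =
      if b = a then MonoidAlgebra.single z c else 0 := by
  refine ext_apply fun w => ?_
  simp only [rstrip_apply, single_apply, mul_of_eq_mul_of_iff]
  split_ifs with h1 h2 h2 <;> simp_all

theorem rstrip_single_one (c : ℚ) : rstrip a (MonoidAlgebra.single 1 c) = 0 :=
  ext_apply fun w => by rw [rstrip_apply, single_apply, if_neg (of_mul_ne_one w a).symm]; rfl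

theorem word_eq_one_or_mul_of (v : Word) : v = 1 ∨ ∃ z b, v = z * FreeMonoid.of b := by
  rcases List.eq_nil_or_concat (FreeMonoid.toList v) with h | ⟨l, b, h⟩
  · exact .inl (FreeMonoid.toList.injective h)
  · exact .inr ⟨FreeMonoid.ofList l, b, FreeMonoid.toList.injective (by simpa using h)⟩

theorem rstrip_mul (f g : R2) : rstrip a (f * g) = f * rstrip a g + g 1 • rstrip a f := by
  induction f using MonoidAlgebra.induction_linear with
  | zero => simp
  | add f f' hf hf' => simp only [add_mul, map_add, hf, hf', smul_add]; abel
  | single u r =>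
    induction g using MonoidAlgebra.induction_linear with
    | zero => simp
    | add g g' hg hg' =>
      simp only [mul_add, map_add, hg, hg', MonoidAlgebra.coeff_add, Finsupp.add_apply, add_smul]
      abel
    | single v s =>
      rw [MonoidAlgebra.single_mul_single]
      rcases word_eq_one_or_mul_of v with rfl | ⟨z, b, rfl⟩
      · rw [mul_one, rstrip_single_one, mul_zero, zero_add, single_apply, if_pos rfl, ← map_smul,
          MonoidAlgebra.smul_single, smul_eq_mul, mul_comm]
      · rw [single_apply, if_neg (of_mul_ne_one z b),
          zero_smul, add_zero, ← mul_assoc, rstrip_single_mul_of, rstrip_single_mul_of]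
        split_ifs <;> simp [MonoidAlgebra.single_mul_single]

theorem rstrip_letter (b : Fin 2) : rstrip a (letter b) = if b = a then 1 else 0 := by
  rw [letter_eq_single, ← one_mul (FreeMonoid.of b), rstrip_single_mul_of]; rfl

theorem rstrip_mul_letter (f : R2) (b : Fin 2) :
    rstrip a (f * letter b) = if b = a then f else 0 := by
  rw [rstrip_mul, letter_apply_one, zero_smul, add_zero, rstrip_letter]
  split_ifs <;> simp

theorem rstrip_one_mul_X (f : R2) : rstrip 1 (f * X) = 0 := by
  rw [← letter_zero, rstrip_mul_letter, if_neg zero_ne_one]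

theorem rstrip_one_mul_Y (f : R2) : rstrip 1 (f * Y) = f := by
  rw [← letter_one, rstrip_mul_letter, if_pos rfl]

theorem rstrip_one_X : rstrip 1 X = 0 := by rw [← letter_zero, rstrip_letter, if_neg zero_ne_one]

theorem rstrip_one_Y : rstrip 1 Y = 1 := by rw [← letter_one, rstrip_letter, if_pos rfl]

theorem IsHomog.rstrip {m : ℕ} {f : R2} (hf : IsHomog (m + 1) f) : IsHomog m (rstrip a f) :=
  fun w hw => by
    have hw' := Finsupp.mem_support_iff.mp hw
    simpa [wlen_mul, wlen_of] using hf (w * FreeMonoid.of a) (Finsupp.mem_support_iff.mpr hw')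

end Rstrip

def theta : R2 →ₐ[ℚ] Module.End ℚ R2 :=
  MonoidAlgebra.lift ℚ (Module.End ℚ R2) Word
    (FreeMonoid.lift fun a => LieAlgebra.ad ℚ R2 (letter a))

theorem theta_letter (a : Fin 2) (g : R2) : theta (letter a) g = ⁅letter a, g⁆ := by
  simp [theta, letter]

theorem theta_X (g : R2) : theta X g = ⁅X, g⁆ := theta_letter 0 g

theorem theta_Y (g : R2) : theta Y g = ⁅Y, g⁆ := theta_letter 1 g

theorem theta_of_mul (a : Fin 2) (w : Word) (g : R2) :
    theta (MonoidAlgebra.of ℚ Word (FreeMonoid.of a * w)) g =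
      ⁅letter a, theta (MonoidAlgebra.of ℚ Word w) g⁆ := by
  rw [map_mul, map_mul, Module.End.mul_apply, ← theta_letter]; rfl

theorem theta_single (w : Word) (c : ℚ) :
    theta (MonoidAlgebra.single w c) = c • theta (MonoidAlgebra.of ℚ Word w) := by
  rw [MonoidAlgebra.of_apply, ← map_smul, MonoidAlgebra.smul_single', mul_one]

theorem theta_apply_mem (f : R2) {g : R2} (hg : g ∈ LieP) : theta f g ∈ LieP := by
  induction f using MonoidAlgebra.induction_on with
  | of w =>
    induction w using FreeMonoid.inductionOn' with
    | one => rwa [map_one, map_one, Module.End.one_apply]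
    | of_mul a w ih => rw [theta_of_mul]; exact LieP.lie_mem (letter_mem_LieP a) ih
  | add f f' hf hf' => rw [map_add, LinearMap.add_apply]; exact LieP.add_mem hf hf'
  | smul c f hf => rw [map_smul, LinearMap.smul_apply]; exact LieP.smul_mem c hf

theorem IsHomog.theta_apply {p q : ℕ} {f g : R2} (hf : IsHomog p f) (hg : IsHomog q g) :
    IsHomog (p + q) (theta f g) := by
  have hword (w : Word) : IsHomog (wlen w + q) (theta (MonoidAlgebra.of ℚ Word w) g) := by
    induction w using FreeMonoid.inductionOn' with
    | one => rwa [map_one, map_one, Module.End.one_apply, wlen, FreeMonoid.toList_one,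
        List.length_nil, zero_add]
    | of_mul a w ih =>
      rw [theta_of_mul, wlen_mul, wlen_of, add_assoc]
      exact (isHomog_letter a).lie ih
  refine hf.map (L := LinearMap.applyₗ g ∘ₗ theta.toLinearMap) fun w c hw => ?_
  show IsHomog _ (theta (MonoidAlgebra.single w c) g)
  rw [theta_single, LinearMap.smul_apply, ← hw]
  exact (hword w).smul c

theorem theta_eq_lie_of_mem {f : R2} (hf : f ∈ LieP) (g : R2) : theta f g = ⁅f, g⁆ := by
  induction hf using LieSubalgebra.lieSpan_induction generalizing g with
  | mem x hx =>
    rcases hx with rfl | rfl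
    exacts [theta_X g, theta_Y g]
  | zero => simp
  | add x y _ _ hx hy => rw [map_add, LinearMap.add_apply, hx, hy, add_lie]
  | smul c x _ hx => rw [map_smul, LinearMap.smul_apply, hx, smul_lie]
  | lie x y _ _ hx hy =>
    rw [Ring.lie_def x y, map_sub, LinearMap.sub_apply, map_mul, map_mul, Module.End.mul_apply,
      Module.End.mul_apply, hy, hx, hx, hy, ← Ring.lie_def, lie_lie]

theorem theta_X_pow_X {i : ℕ} (hi : i ≠ 0) : theta (X ^ i) X = 0 := by
  obtain ⟨k, rfl⟩ := Nat.exists_eq_succ_of_ne_zero hi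
  rw [pow_succ, map_mul, Module.End.mul_apply, theta_X, lie_self, map_zero]

def dxL : Module.End ℚ R2 := linExt dxW

theorem coe_dxL : ⇑dxL = dx := rfl

theorem dx_iterate (i : ℕ) : dx^[i] = ⇑(dxL ^ i) := by rw [Module.End.coe_pow, coe_dxL]

theorem dx_single (w : Word) (c : ℚ) : dx (MonoidAlgebra.single w c) = c • dxW w :=
  linExt_single dxW w c

theorem dxW_of_mul (a : Fin 2) (w : Word) :
    dxW (FreeMonoid.of a * w) = (if a = 0 then mono w else 0) + letter a * dxW w := by
  have hmono (l : List (Fin 2)) :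
      mono (FreeMonoid.ofList (a :: l)) = letter a * mono (FreeMonoid.ofList l) := by
    rw [letter_eq_single, mono, mono, MonoidAlgebra.single_mul_single, one_mul]; rfl
  simp only [dxW, wlen_mul, wlen_of, add_comm 1, Finset.sum_range_succ', Finset.mul_sum,
    FreeMonoid.toList_of_mul]
  rw [add_comm]
  congr 1
  refine Finset.sum_congr rfl fun i _ => ?_
  simp only [List.getD_cons_succ, List.eraseIdx_cons_succ]
  split_ifs
  exacts [hmono _, (mul_zero _).symm]

theorem dx_letter_mul (a : Fin 2) (h : R2) :
    dx (letter a * h) = (if a = 0 then h else 0) + letter a * dx h := by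
  induction h using MonoidAlgebra.induction_linear with
  | zero => simp [← coe_dxL]
  | add h h' ih ih' =>
    simp only [mul_add, ← coe_dxL, map_add] at ih ih' ⊢
    rw [ih, ih']
    split_ifs <;> abel
  | single w c =>
    rw [letter_eq_single, MonoidAlgebra.single_mul_single, one_mul, dx_single, dx_single,
      dxW_of_mul, smul_add, mul_smul_comm, ← letter_eq_single]
    split_ifs
    · rw [mono, MonoidAlgebra.smul_single', mul_one]
    · rw [smul_zero]

theorem dx_X_mul (h : R2) : dx (X * h) = h + X * dx h := by
  have := dx_letter_mul 0 h
  rwa [if_pos rfl] at this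

theorem dx_Y_mul (h : R2) : dx (Y * h) = Y * dx h := by
  have := dx_letter_mul 1 h
  rwa [if_neg one_ne_zero, zero_add] at this

theorem dx_iterate_Y_mul (i : ℕ) (h : R2) : dx^[i] (Y * h) = Y * dx^[i] h := by
  induction i generalizing h with
  | zero => rfl
  | succ k ih => rw [Function.iterate_succ_apply, Function.iterate_succ_apply, dx_Y_mul, ih]

theorem dx_iterate_succ_X_mul (k : ℕ) (h : R2) :
    dx^[k + 1] (X * h) = X * dx^[k + 1] h + ((k + 1 : ℕ) : ℚ) • dx^[k] h := by
  induction k with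
  | zero => simp [dx_X_mul, add_comm]
  | succ j ih =>
    rw [Function.iterate_succ_apply' _ (j + 1), ih, ← coe_dxL, map_add, map_smul, coe_dxL,
      dx_X_mul, ← Function.iterate_succ_apply' dx (j + 1), ← Function.iterate_succ_apply' dx j]
    push_cast
    module

theorem wlen_of_mem_support_dxW {v w : Word} (hw : w ∈ (dxW v).coeff.support) :
    wlen w + 1 = wlen v := by
  classical
  simp only [dxW, MonoidAlgebra.coeff_sum] at hw
  obtain ⟨i, hi, hw⟩ := Finset.mem_biUnion.mp (Finsupp.support_finsetSum hw)
  rw [Finset.mem_range] at hi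
  split_ifs at hw
  · rw [Finset.mem_singleton.mp (Finsupp.support_single_subset hw), wlen,
      FreeMonoid.toList_ofList, List.length_eraseIdx_of_lt hi]
    exact Nat.sub_add_cancel (Nat.one_le_of_lt hi)
  · simp at hw

theorem exists_of_mem_support_dx {f : R2} {w : Word} (hw : w ∈ (dx f).coeff.support) :
    ∃ v ∈ f.coeff.support, wlen w + 1 = wlen v := by
  classical
  rw [dx, MonoidAlgebra.coeff_finsuppSum] at hw
  obtain ⟨v, hv, hw⟩ := Finset.mem_biUnion.mp (Finsupp.support_sum hw)
  exact ⟨v, hv, wlen_of_mem_support_dxW (Finsupp.support_smul hw)⟩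

theorem isHomog_dx {m : ℕ} {f : R2} (hf : IsHomog (m + 1) f) : IsHomog m (dx f) := fun w hw => by
  obtain ⟨v, hv, hlen⟩ := exists_of_mem_support_dx hw
  have := hf v hv
  omega

theorem IsHomog.dx_iterate {m i : ℕ} {f : R2} (hf : IsHomog (m + i) f) :
    IsHomog m (dx^[i] f) := by
  induction i generalizing f with
  | zero => exact hf
  | succ i ih => exact ih (isHomog_dx (by rwa [← add_assoc] at hf))

section DegLE

def DegLE (N : ℕ) (f : R2) : Prop := ∀ w ∈ f.coeff.support, wlen w ≤ N

variable {N M : ℕ} {f g : R2}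

theorem degLE_sup (f : R2) : DegLE (f.coeff.support.sup wlen) f := fun _ hw => Finset.le_sup hw

theorem IsHomog.degLE (hf : IsHomog N f) : DegLE N f := fun w hw => (hf w hw).le

theorem DegLE.mono (hf : DegLE N f) (hNM : N ≤ M) : DegLE M f := fun w hw => (hf w hw).trans hNM

theorem DegLE.add (hf : DegLE N f) (hg : DegLE N g) : DegLE N (f + g) := fun w hw => by
  rcases Finset.mem_union.mp (Finsupp.support_add hw) with h | h
  exacts [hf w h, hg w h]

theorem DegLE.smul (c : ℚ) (hf : DegLE N f) : DegLE N (c • f) := fun w hw =>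
  hf w (Finsupp.support_smul hw)

theorem DegLE.mul (hf : DegLE N f) (hg : DegLE M g) : DegLE (N + M) (f * g) := fun w hw => by
  obtain ⟨u, hu, v, hv, rfl⟩ := Finset.mem_mul.mp (MonoidAlgebra.support_coeff_mul_subset f g hw)
  rw [wlen_mul]
  exact Nat.add_le_add (hf u hu) (hg v hv)

theorem degLE_dx (hf : DegLE (N + 1) f) : DegLE N (dx f) := fun w hw => by
  obtain ⟨v, hv, hlen⟩ := exists_of_mem_support_dx hw
  have := hf v hv
  omega

theorem DegLE.dx_iterate_eq_zero (hf : DegLE N f) {i : ℕ} (hi : N < i) : dx^[i] f = 0 := by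
  obtain ⟨j, rfl⟩ : ∃ j, i = j + 1 := ⟨i - 1, by omega⟩
  rw [Function.iterate_succ_apply]
  induction N generalizing f j with
  | zero =>
    have hdx : dx f = 0 := Finset.sum_eq_zero fun w hw => by
      simp [dxW, Nat.le_zero.mp (hf w hw)]
    rw [hdx, dx_iterate, map_zero]
  | succ N ih =>
    obtain ⟨k, rfl⟩ : ∃ k, j = k + 1 := ⟨j - 1, by omega⟩
    rw [Function.iterate_succ_apply]
    exact ih (degLE_dx hf) k (by omega)

end DegLE

def sCoeff (i : ℕ) : ℚ := (-1) ^ i / i.factorial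

theorem sCoeff_zero : sCoeff 0 = 1 := by simp [sCoeff]

theorem sCoeff_succ_mul (j : ℕ) : sCoeff (j + 1) * ((j + 1 : ℕ) : ℚ) = -sCoeff j := by
  rw [sCoeff, sCoeff, Nat.factorial_succ]
  push_cast
  field_simp
  ring

theorem DegLE.sMap_eq_sum {N : ℕ} {h : R2} (hh : DegLE N h) :
    sMap h = ∑ i ∈ Finset.range (N + 1), sCoeff i • (dx^[i] h * Y * X ^ i) := by
  refine finsum_eq_sum_of_support_subset _ fun i hi => ?_
  by_contra hmem
  simp only [Finset.coe_range, Set.mem_Iio, not_lt] at hmem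
  rw [Function.mem_support, hh.dx_iterate_eq_zero (by omega), zero_mul, zero_mul,
    smul_zero] at hi
  exact hi rfl

theorem sMap_add (a b : R2) : sMap (a + b) = sMap a + sMap b := by
  set N := max (a.coeff.support.sup wlen) (b.coeff.support.sup wlen)
  have ha : DegLE N a := (degLE_sup a).mono (le_max_left _ _)
  have hb : DegLE N b := (degLE_sup b).mono (le_max_right _ _)
  rw [(ha.add hb).sMap_eq_sum, ha.sMap_eq_sum, hb.sMap_eq_sum, ← Finset.sum_add_distrib]
  refine Finset.sum_congr rfl fun i _ => ?_
  rw [dx_iterate, map_add, add_mul, add_mul, smul_add]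

theorem sMap_smul (c : ℚ) (a : R2) : sMap (c • a) = c • sMap a := by
  have ha := degLE_sup a
  rw [(ha.smul c).sMap_eq_sum, ha.sMap_eq_sum, Finset.smul_sum]
  refine Finset.sum_congr rfl fun i _ => ?_
  rw [dx_iterate, map_smul, smul_mul_assoc, smul_mul_assoc, smul_comm]

theorem sMap_sub (a b : R2) : sMap (a - b) = sMap a - sMap b := by
  rw [sub_eq_add_neg, sMap_add, ← neg_one_smul ℚ b, sMap_smul, neg_one_smul, sub_eq_add_neg]

theorem sMap_zero : sMap 0 = 0 := by simpa using sMap_smul 0 0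

theorem sMap_one : sMap 1 = Y := by
  have h1 : DegLE 0 (1 : R2) := (isHomog_single (w := 1) rfl 1).degLE
  rw [h1.sMap_eq_sum]
  simp [sCoeff_zero]

theorem sMap_Y_mul (h : R2) : sMap (Y * h) = Y * sMap h := by
  have hh := degLE_sup h
  rw [(isHomog_Y.degLE.mul hh).sMap_eq_sum, add_comm 1, Finset.sum_range_succ,
    dx_iterate_Y_mul, hh.dx_iterate_eq_zero (Nat.lt_succ_self _), mul_zero, zero_mul, zero_mul,
    smul_zero, add_zero, hh.sMap_eq_sum, Finset.mul_sum]
  refine Finset.sum_congr rfl fun i _ => ?_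
  rw [dx_iterate_Y_mul, mul_smul_comm, mul_assoc, mul_assoc, mul_assoc]

theorem sMap_X_mul (h : R2) : sMap (X * h) = X * sMap h - sMap h * X := by
  have hh := degLE_sup h
  set N := h.coeff.support.sup wlen
  have hsplit : ∀ i ∈ Finset.range (N + 2), sCoeff i • (dx^[i] (X * h) * Y * X ^ i) =
      sCoeff i • (X * dx^[i] h * Y * X ^ i) +
        (sCoeff i * (i : ℚ)) • (dx^[i - 1] h * Y * X ^ i) := by
    intro i _
    cases i with
    | zero => simp
    | succ k =>
      rw [dx_iterate_succ_X_mul, add_mul, add_mul, smul_add, smul_mul_assoc, smul_mul_assoc,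
        smul_smul, Nat.add_sub_cancel]
  have hX : ∑ i ∈ Finset.range (N + 2), sCoeff i • (X * dx^[i] h * Y * X ^ i) = X * sMap h := by
    rw [Finset.sum_range_succ, hh.dx_iterate_eq_zero (by omega), mul_zero, zero_mul, zero_mul,
      smul_zero, add_zero, hh.sMap_eq_sum, Finset.mul_sum]
    refine Finset.sum_congr rfl fun i _ => ?_
    simp only [mul_smul_comm, mul_assoc]
  have hderiv : ∑ i ∈ Finset.range (N + 2), (sCoeff i * (i : ℚ)) • (dx^[i - 1] h * Y * X ^ i) =
      -(sMap h * X) := by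
    rw [Finset.sum_range_succ', Nat.cast_zero, mul_zero, zero_smul, add_zero, hh.sMap_eq_sum,
      Finset.sum_mul, ← Finset.sum_neg_distrib]
    refine Finset.sum_congr rfl fun j _ => ?_
    rw [Nat.add_sub_cancel, sCoeff_succ_mul, pow_succ, ← mul_assoc,
      smul_mul_assoc, neg_smul]
  rw [(isHomog_X.degLE.mul hh).sMap_eq_sum, add_comm 1, Finset.sum_congr rfl hsplit,
    Finset.sum_add_distrib, hX, hderiv, sub_eq_add_neg]

theorem IsHomog.sMap {m : ℕ} {h : R2} (hh : IsHomog m h) : IsHomog (m + 1) (sMap h) := by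
  rw [hh.degLE.sMap_eq_sum]
  refine isHomog_sum _ fun i hi => IsHomog.smul _ ?_
  have hi : i ≤ m := Nat.lt_succ_iff.mp (Finset.mem_range.mp hi)
  have hdx : IsHomog (m - i) (dx^[i] h) := IsHomog.dx_iterate (by rwa [Nat.sub_add_cancel hi])
  have := (hdx.mul isHomog_Y).mul (isHomog_X_pow i)
  rwa [show m - i + 1 + i = m + 1 by omega] at this

theorem apply_of_pow_eq_zero_of_mul_Y_mul (A B : R2) (k : ℕ) :
    (A * Y * B) (FreeMonoid.of 0 ^ k) = 0 := by
  by_contra hne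
  obtain ⟨u, hu, v, -, huv⟩ := Finset.mem_mul.mp
    (MonoidAlgebra.support_coeff_mul_subset _ _ (Finsupp.mem_support_iff.mpr hne))
  obtain ⟨z, -, y, hy, hzy⟩ := Finset.mem_mul.mp (MonoidAlgebra.support_coeff_mul_subset _ _ hu)
  rw [← letter_one, letter_eq_single, Finsupp.mem_support_iff, single_apply] at hy
  have hy1 : FreeMonoid.of 1 = y := by_contra fun h => hy (if_neg h)
  have h1 := congrArg (fun w : Word => (1 : Fin 2) ∈ FreeMonoid.toList w) huv
  simp [← hzy, ← hy1, FreeMonoid.toList_mul, toList_of_pow] at h1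

theorem sMap_apply_of_pow (h : R2) (k : ℕ) : sMap h (FreeMonoid.of 0 ^ k) = 0 := by
  rw [(degLE_sup h).sMap_eq_sum, MonoidAlgebra.coeff_sum, Finsupp.finsetSum_apply]
  exact Finset.sum_eq_zero fun i _ => by
    rw [MonoidAlgebra.coeff_smul_apply, apply_of_pow_eq_zero_of_mul_Y_mul, smul_zero]

theorem theta_sMap_X (h : R2) : theta (sMap h) X = -theta h ⁅X, Y⁆ := by
  rw [(degLE_sup h).sMap_eq_sum, map_sum, LinearMap.sum_apply,
    Finset.sum_eq_single_of_mem 0 (Finset.mem_range.mpr (Nat.succ_pos _))]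
  · rw [sCoeff_zero, one_smul, pow_zero, mul_one, Function.iterate_zero_apply, map_mul,
      Module.End.mul_apply, theta_Y, ← lie_skew, map_neg]
  · intro i _ hi
    rw [map_smul, map_mul, LinearMap.smul_apply, Module.End.mul_apply, theta_X_pow_X hi,
      map_zero, smul_zero]

structure SCompatible (f : R2) : Prop where
  sMap_mul : ∀ h, sMap (f * h) = f * sMap h - f (FreeMonoid.of 0) • (sMap h * X)
  sMap_rstrip : sMap (rstrip 1 f) + f (FreeMonoid.of 0) • X = f

theorem sCompatible_X : SCompatible X where
  sMap_mul h := by rw [sMap_X_mul, X_apply_of_zero, one_smul]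
  sMap_rstrip := by rw [rstrip_one_X, sMap_zero, zero_add, X_apply_of_zero, one_smul]

theorem sCompatible_Y : SCompatible Y where
  sMap_mul h := by rw [sMap_Y_mul, Y_apply_of_zero, zero_smul, sub_zero]
  sMap_rstrip := by rw [rstrip_one_Y, sMap_one, Y_apply_of_zero, zero_smul, add_zero]

theorem sCompatible_zero : SCompatible 0 where
  sMap_mul h := by simp [sMap_zero]
  sMap_rstrip := by simp [sMap_zero]

namespace SCompatible

variable {a b f : R2}

theorem apply_of_pow (hf : SCompatible f) (m : ℕ) :
    f (FreeMonoid.of 0 ^ m) = if m = 1 then f (FreeMonoid.of 0) else 0 := by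
  conv_lhs => rw [← hf.sMap_rstrip]
  rw [MonoidAlgebra.coeff_add, Finsupp.add_apply, MonoidAlgebra.coeff_smul_apply,
    sMap_apply_of_pow, X_apply_of_pow, zero_add]
  split_ifs <;> simp

theorem apply_one (hf : SCompatible f) : f 1 = 0 := by
  simpa using hf.apply_of_pow 0

theorem add (ha : SCompatible a) (hb : SCompatible b) : SCompatible (a + b) where
  sMap_mul h := by
    simp only [add_mul, sMap_add, ha.sMap_mul, hb.sMap_mul, MonoidAlgebra.coeff_add,
      Finsupp.add_apply, add_smul]
    abel
  sMap_rstrip := by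
    rw [map_add, sMap_add, MonoidAlgebra.coeff_add, Finsupp.add_apply, add_smul]
    nth_rewrite 3 [← ha.sMap_rstrip, ← hb.sMap_rstrip]
    abel

theorem smul (c : ℚ) (ha : SCompatible a) : SCompatible (c • a) where
  sMap_mul h := by
    simp only [smul_mul_assoc, sMap_smul, ha.sMap_mul, MonoidAlgebra.coeff_smul_apply, smul_eq_mul,
      mul_smul, smul_sub]
  sMap_rstrip := by
    rw [map_smul, sMap_smul, MonoidAlgebra.coeff_smul_apply, smul_eq_mul, mul_smul, ← smul_add,
      ha.sMap_rstrip]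

theorem lie (ha : SCompatible a) (hb : SCompatible b) : SCompatible ⁅a, b⁆ := by
  have hrstrip : rstrip 1 ⁅a, b⁆ = a * rstrip 1 b - b * rstrip 1 a := by
    rw [Ring.lie_def, map_sub, rstrip_mul, rstrip_mul, ha.apply_one, hb.apply_one, zero_smul,
      zero_smul, add_zero, add_zero]
  have hs : sMap (rstrip 1 ⁅a, b⁆) = ⁅a, b⁆ := by
    rw [hrstrip, sMap_sub, ha.sMap_mul, hb.sMap_mul, eq_sub_of_add_eq ha.sMap_rstrip,
      eq_sub_of_add_eq hb.sMap_rstrip, Ring.lie_def]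
    simp only [mul_sub, sub_mul, smul_mul_assoc, mul_smul_comm, smul_sub, smul_smul]
    module
  have hx : ⁅a, b⁆ (FreeMonoid.of 0) = 0 := by
    rw [← hs, ← pow_one (FreeMonoid.of (0 : Fin 2)), sMap_apply_of_pow]
  refine ⟨fun h => ?_, by rw [hs, hx, zero_smul, add_zero]⟩
  rw [hx, zero_smul, sub_zero, Ring.lie_def, sub_mul, sMap_sub, mul_assoc, mul_assoc,
    ha.sMap_mul, hb.sMap_mul, hb.sMap_mul, ha.sMap_mul]
  simp only [mul_sub, sub_mul, smul_mul_assoc, mul_smul_comm, smul_sub, smul_smul, mul_assoc]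
  module

end SCompatible

theorem sCompatible_of_mem {f : R2} (hf : f ∈ LieP) : SCompatible f := by
  induction hf using LieSubalgebra.lieSpan_induction with
  | mem x hx =>
    rcases hx with rfl | rfl
    exacts [sCompatible_X, sCompatible_Y]
  | zero => exact sCompatible_zero
  | add x y _ _ hx hy => exact hx.add hy
  | smul c x _ hx => exact hx.smul c
  | lie x y _ _ hx hy => exact hx.lie hy

theorem sMap_rstrip_one_of_mem {f : R2} (hf : f ∈ LieP) (hfx : f (FreeMonoid.of 0) = 0) :
    sMap (rstrip 1 f) = f := by
  simpa [hfx] using (sCompatible_of_mem hf).sMap_rstrip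

theorem apply_of_pow_eq_zero_of_mem {f : R2} (hf : f ∈ LieP) {m : ℕ} (hm : m ≠ 1) :
    f (FreeMonoid.of 0 ^ m) = 0 := by
  rw [(sCompatible_of_mem hf).apply_of_pow, if_neg hm]

theorem apply_one_eq_zero_of_mem {f : R2} (hf : f ∈ LieP) : f 1 = 0 :=
  (sCompatible_of_mem hf).apply_one

/-- The right-normed bracketing `a₁ ⋯ aₘ ↦ [a₁, [a₂, ⋯ [aₘ₋₁, aₘ] ⋯]]`, extended linearly. -/
def psi : R2 →ₗ[ℚ] R2 where
  toFun f := ∑ a, theta (rstrip a f) (letter a)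
  map_add' f g := by simp [Finset.sum_add_distrib]
  map_smul' c f := by simp

theorem psi_apply (f : R2) : psi f = ∑ a, theta (rstrip a f) (letter a) := rfl

theorem psi_mul (f g : R2) : psi (f * g) = theta f (psi g) + g 1 • psi f := by
  simp only [psi_apply, rstrip_mul, map_add, map_mul, map_smul, LinearMap.add_apply,
    Module.End.mul_apply, LinearMap.smul_apply, Finset.sum_add_distrib, map_sum, Finset.smul_sum]

theorem psi_letter (b : Fin 2) : psi (letter b) = letter b := by
  fin_cases b <;> simp [psi_apply, rstrip_letter]

theorem psi_lie_X (u : R2) (hu : u 1 = 0) : psi ⁅X, u⁆ = ⁅X, psi u⁆ - theta u X := by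
  rw [Ring.lie_def, map_sub, psi_mul, psi_mul, hu, ← letter_zero, letter_apply_one, psi_letter,
    zero_smul, zero_smul, add_zero, add_zero, theta_letter]

theorem psi_mem (f : R2) : psi f ∈ LieP := by
  rw [psi_apply]
  exact LieP.toSubmodule.sum_mem fun a _ => theta_apply_mem _ (letter_mem_LieP a)

theorem IsHomog.psi {m : ℕ} {f : R2} (hf : IsHomog (m + 1) f) : IsHomog (m + 1) (psi f) :=
  isHomog_sum _ fun a _ => (hf.rstrip a).theta_apply (isHomog_letter a)

/-- The Dynkin–Specht–Wever theorem. -/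
theorem psi_eq_degD_of_mem {f : R2} (hf : f ∈ LieP) : psi f = degD f := by
  induction hf using LieSubalgebra.lieSpan_induction with
  | mem x hx =>
    rcases hx with rfl | rfl
    exacts [(psi_letter 0).trans (degD_letter 0).symm, (psi_letter 1).trans (degD_letter 1).symm]
  | zero => simp
  | add x y _ _ hx hy => rw [map_add, map_add, hx, hy]
  | smul c x _ hx => rw [map_smul, map_smul, hx]
  | lie x y hxL hyL hx hy =>
    rw [Ring.lie_def, map_sub, map_sub, psi_mul, psi_mul, apply_one_eq_zero_of_mem hyL,
      apply_one_eq_zero_of_mem hxL, zero_smul, zero_smul, add_zero, add_zero, hx, hy,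
      theta_eq_lie_of_mem hxL, theta_eq_lie_of_mem hyL, degD_mul, degD_mul, Ring.lie_def,
      Ring.lie_def]
    abel

theorem X_mul_apply_of_mul (v : R2) (w : Word) : (X * v) (FreeMonoid.of 0 * w) = v w := by
  rw [← letter_zero, letter_eq_single, MonoidAlgebra.coeff_single_mul_mul, one_mul]

theorem mul_X_apply_mul_of (v : R2) (w : Word) : (v * X) (w * FreeMonoid.of 0) = v w := by
  rw [← letter_zero, letter_eq_single, MonoidAlgebra.coeff_mul_single_mul, mul_one]

theorem X_mul_apply_of_one_mul (v : R2) (w : Word) : (X * v) (FreeMonoid.of 1 * w) = 0 :=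
  MonoidAlgebra.coeff_single_mul_of_forall_mul_ne _ _ fun d h => by
    simpa using congrArg List.head? (congrArg FreeMonoid.toList h)

theorem word_eq_of_pow_or_eq_mul (w : Word) :
    (∃ m, w = FreeMonoid.of 0 ^ m) ∨ ∃ k u, w = FreeMonoid.of 0 ^ k * FreeMonoid.of 1 * u := by
  induction w using FreeMonoid.inductionOn' with
  | one => exact .inl ⟨0, (pow_zero _).symm⟩
  | of_mul b w ih =>
    fin_cases b
    · rcases ih with ⟨m, rfl⟩ | ⟨k, u, rfl⟩
      · exact .inl ⟨m + 1, by rw [pow_succ']; rfl⟩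
      · exact .inr ⟨k + 1, u, by rw [pow_succ', mul_assoc, mul_assoc, mul_assoc]; rfl⟩
    · exact .inr ⟨0, w, by rw [pow_zero, one_mul]; rfl⟩

theorem eq_zero_of_X_mul_eq_mul_X {m : ℕ} {v : R2} (hc : X * v = v * X) (hv : IsHomog m v)
    (h0 : v (FreeMonoid.of 0 ^ m) = 0) : v = 0 := by
  -- `X * v = v * X` gives `v (x w) = v (w x)` and `v (y w) = 0`.
  have hy (k : ℕ) : ∀ u, v (FreeMonoid.of 0 ^ k * FreeMonoid.of 1 * u) = 0 := by
    induction k with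
    | zero =>
      intro u
      rw [pow_zero, one_mul, ← mul_X_apply_mul_of, ← hc, mul_assoc, X_mul_apply_of_one_mul]
    | succ k ih =>
      intro u
      rw [← mul_X_apply_mul_of, ← hc, pow_succ']
      simpa only [mul_assoc, X_mul_apply_of_mul] using ih (u * FreeMonoid.of 0)
  refine ext_apply fun w => ?_
  rcases word_eq_of_pow_or_eq_mul w with ⟨k, rfl⟩ | ⟨k, u, rfl⟩
  · rcases eq_or_ne k m with rfl | hk
    · exact h0
    · exact hv.apply_eq_zero (by rwa [wlen_of_pow])
  · exact hy k u

theorem eq_of_lie_X_eq {m : ℕ} {u v : R2} (hu : IsHomog m u) (hv : IsHomog m v)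
    (hu0 : u (FreeMonoid.of 0 ^ m) = 0) (hv0 : v (FreeMonoid.of 0 ^ m) = 0)
    (h : ⁅X, u⁆ = ⁅X, v⁆) : u = v := by
  refine sub_eq_zero.mp (eq_zero_of_X_mul_eq_mul_X (m := m) ?_ (hu.sub hv) ?_)
  · rw [← sub_eq_zero, ← Ring.lie_def, lie_sub, h, sub_self]
  · rw [MonoidAlgebra.coeff_sub, Finsupp.sub_apply, hu0, hv0, sub_zero]

theorem theta_rstrip_one_of_mem {f : R2} (hf : f ∈ LieP) :
    theta (rstrip 1 f) ⁅X, Y⁆ = ⁅X, f⁆ := by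
  have h := congrArg (fun g => theta g X) (sCompatible_of_mem hf).sMap_rstrip
  simp only [map_add, LinearMap.add_apply, theta_sMap_X, map_smul, LinearMap.smul_apply, theta_X,
    lie_self, smul_zero, add_zero, theta_eq_lie_of_mem hf] at h
  rw [← lie_skew X f, ← h, neg_neg]

theorem theta_lie_X_Y_of_rstrip_one_eq {m : ℕ} {f P : R2} (hf : f ∈ LieP) (hfh : IsHomog (m + 2) f)
    (hP : IsHomog m P) (h : rstrip 1 f = X * P) : theta P ⁅X, Y⁆ = f := by
  refine eq_of_lie_X_eq (hP.theta_apply (isHomog_X.lie isHomog_Y)) hfh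
    (apply_of_pow_eq_zero_of_mem (theta_apply_mem _ (LieP.lie_mem (letter_mem_LieP 0)
      (letter_mem_LieP 1))) (by omega)) (apply_of_pow_eq_zero_of_mem hf (by omega)) ?_
  rw [← theta_X, ← Module.End.mul_apply, ← map_mul, ← h, theta_rstrip_one_of_mem hf]

theorem mem_LieP_of_lie_X_mem {m : ℕ} {u : R2} (hu : IsHomog (m + 2) u)
    (hu0 : u (FreeMonoid.of 0 ^ (m + 2)) = 0) (hf : ⁅X, u⁆ ∈ LieP)
    (hθ : theta u X = -⁅X, u⁆) : u ∈ LieP := by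
  have hfh : IsHomog (m + 3) ⁅X, u⁆ := by
    rw [show m + 3 = 1 + (m + 2) by omega]; exact isHomog_X.lie hu
  have hψ : ⁅X, psi u⁆ = ⁅X, ((m + 2 : ℕ) : ℚ) • u⁆ := by
    have h := psi_eq_degD_of_mem hf
    rw [psi_lie_X u (hu.apply_eq_zero (by rw [wlen_one]; omega)), hθ, hfh.degD_eq,
      sub_neg_eq_add] at h
    rw [lie_smul, eq_sub_of_add_eq h]
    push_cast
    module
  have hψu : psi u = ((m + 2 : ℕ) : ℚ) • u :=
    eq_of_lie_X_eq hu.psi (hu.smul _) (apply_of_pow_eq_zero_of_mem (psi_mem u) (by omega))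
      (by rw [MonoidAlgebra.coeff_smul_apply, hu0, smul_zero]) hψ
  rw [← inv_smul_smul₀ (by positivity : ((m + 2 : ℕ) : ℚ) ≠ 0) u, ← hψu]
  exact LieP.smul_mem _ (psi_mem u)

theorem stmt4_general (n : ℕ) (hn : 3 ≤ n) (f : R2) (hf : InLieN n f)
    (fx fy P : R2)
    (hdec : f = fx * X + fy * Y)
    (hP : fy * Y = X * P * Y)
    (hPhom : IsHomog (n - 2) P) :
    InLieN (n - 1) (sMap P) ∧ f = X * sMap P - sMap P * X := by
  obtain ⟨m, rfl⟩ : ∃ m, n = m + 3 := ⟨n - 3, by omega⟩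
  change IsHomog (m + 1) P at hPhom
  change InLieN (m + 2) (sMap P) ∧ _
  obtain ⟨hfL, hfh⟩ := hf
  have hrstrip : rstrip 1 f = X * P := by
    rw [hdec, hP, map_add, rstrip_one_mul_X, rstrip_one_mul_Y, zero_add]
  have hf_eq : f = X * sMap P - sMap P * X := by
    rw [← sMap_X_mul, ← hrstrip,
      sMap_rstrip_one_of_mem hfL (hfh.apply_eq_zero (by rw [wlen_of]; omega))]
  have hθ : theta (sMap P) X = -⁅X, sMap P⁆ := by
    rw [theta_sMap_X, theta_lie_X_Y_of_rstrip_one_eq hfL hfh hPhom hrstrip, Ring.lie_def, ← hf_eq]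
  refine ⟨⟨mem_LieP_of_lie_X_mem hPhom.sMap (sMap_apply_of_pow P _) ?_ hθ, hPhom.sMap⟩, hf_eq⟩
  rwa [Ring.lie_def, ← hf_eq]

/-- if f ∈ Lie_n[x,y] (n ≥ 3) has no monomial starting and ending in y,
    so that f = f_x·x + f_y·y with f_y·y = x·P·y for P homogeneous of degree n−2, then
    s(P) ∈ Lie_{n−1}[x,y] and f = [x, s(P)]. -/
theorem stmt4 (n : ℕ) (hn : 3 ≤ n) (f : R2) (hf : InLieN n f)
    (hnoyy : ∀ w ∈ f.coeff.support,
      ¬((FreeMonoid.toList w).head? = some 1 ∧ (FreeMonoid.toList w).getLast? = some 1))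
    (fx fy P : R2)
    (hdec : f = fx * X + fy * Y)
    (hP : fy * Y = X * P * Y)
    (hPhom : IsHomog (n - 2) P) :
    InLieN (n - 1) (sMap P) ∧ f = X * sMap P - sMap P * X :=
  stmt4_general n hn f hf fx fy P hdec hP hPhom

end DblSh
end
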